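/- If an expression 𝐰 for w ∈ W is reduced and v ≤ w, then both the left-most and right-most subexpressions for v in 𝐰 exist (this being equivalent to v ≤ m_*(𝐰) = w), and each yields exactly ℓ(v) non-identity entries. -/

import Mathlib

variable {B : Type*} {W : Type*} [Group W] {M : CoxeterMatrix B}

/-- The Bruhat order on `W`: `u ≤ w` iff some reduced expression for `w` contains a
subword whose product is `u`. -/
def bruhatLE (cs : CoxeterSystem M W) (u w : W) : Prop :=
  ∃ ω : List B, cs.IsReduced ω ∧ cs.wordProd ω = w ∧
    ∃ ω' : List B, ω'.Sublist ω ∧ cs.wordProd ω' = u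

/-- The list of letters selected by the left-most subexpression for `v` in `𝐰`:
processing `𝐰` from the left, the letter `i` is selected exactly when `ℓ(s_i v) < ℓ(v)`,
in which case `v` is replaced by `s_i v`. -/
noncomputable def leftMostWord (cs : CoxeterSystem M W) : List B → W → List B
  | [], _ => []
  | i :: rest, v =>
    if cs.length (cs.simple i * v) < cs.length v then
      i :: leftMostWord cs rest (cs.simple i * v)
    else
      leftMostWord cs rest v

/-- Auxiliary recursion for the right-most subexpression: the input list is the *reversed*
expression, processed from the head (i.e. from the right end of the original expression).
The letter `i` is selected exactly when `ℓ(v s_i) < ℓ(v)`, in which case `v` is replaced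
by `v s_i`. -/
noncomputable def rightMostAuxWord (cs : CoxeterSystem M W) : List B → W → List B
  | [], _ => []
  | i :: rest, v =>
    if cs.length (v * cs.simple i) < cs.length v then
      i :: rightMostAuxWord cs rest (v * cs.simple i)
    else
      rightMostAuxWord cs rest v

/-- The list of letters selected by the right-most subexpression for `v` in `𝐰`,
in their original (left-to-right) order. -/
noncomputable def rightMostWord (cs : CoxeterSystem M W) (ω : List B) (v : W) : List B :=
  (rightMostAuxWord cs ω.reverse v).reverse


open List

namespace SubwordAux

attribute [local instance] Classical.propDecidable

variable (cs : CoxeterSystem M W)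

local prefix:100 "s" => cs.simple
local prefix:100 "π" => cs.wordProd
local prefix:100 "ℓ" => cs.length

/-- Sign-twisted conjugation action of a simple reflection on `W × ZMod 2`. -/
noncomputable def F (i : B) : Function.End (W × ZMod 2) :=
  fun p => (s i * p.1 * s i, p.2 + if p.1 = s i then 1 else 0)

lemma F_apply (i : B) (t : W) (ε : ZMod 2) :
    F cs i (t, ε) = (s i * t * s i, ε + if t = s i then 1 else 0) := rfl

lemma F_pow (i j : B) (k : ℕ) (t : W) (ε : ZMod 2) :
    ((F cs i * F cs j) ^ k) (t, ε) =
      ((s i * s j) ^ k * t * ((s i * s j)⁻¹) ^ k,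
        ε + ∑ r ∈ Finset.range (2 * k),
          (if t = ((s i * s j)⁻¹) ^ r * s j then 1 else 0)) := by
  induction k generalizing t ε with
  | zero => simp; rfl
  | succ k ih =>
    have hmul : ((F cs i * F cs j) ^ (k+1)) (t, ε)
        = ((F cs i * F cs j) ^ k) ((F cs i * F cs j) (t, ε)) := by
      rw [pow_succ]; rfl
    have hstep : (F cs i * F cs j) (t, ε)
        = (s i * (s j * t * s j) * s i,
            ε + ((if t = s j then 1 else 0) + (if s j * t * s j = s i then 1 else 0))) := by
      show F cs i (F cs j (t, ε)) = _
      rw [F_apply, F_apply]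
      rw [add_assoc]
    rw [hmul, hstep, ih]
    have hc : ∀ x : W, s i * (s j * t * s j) * s i = x ↔ t = s j * (s i * (x * (s i * s j))) := by
      intro x
      constructor
      · intro h
        rw [← h]
        simp [mul_assoc, cs.simple_mul_simple_cancel_left]
      · intro h
        rw [h]
        simp [mul_assoc, cs.simple_mul_simple_cancel_left]
    have hq : s j * s i = (s i * s j)⁻¹ := by simp [mul_inv_rev, cs.inv_simple]
    have hsp : s j * (s i * s j) = (s i * s j)⁻¹ * s j := by
      simp [mul_inv_rev, cs.inv_simple, mul_assoc]
    have hterm : ∀ r : ℕ, s j * (s i * ((((s i * s j)⁻¹) ^ r * s j) * (s i * s j)))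
        = ((s i * s j)⁻¹) ^ (r + 1 + 1) * s j := by
      intro r
      calc s j * (s i * ((((s i * s j)⁻¹) ^ r * s j) * (s i * s j)))
          = (s j * s i) * (((s i * s j)⁻¹) ^ r * (s j * (s i * s j))) := by
            simp [mul_assoc]
        _ = (s i * s j)⁻¹ * (((s i * s j)⁻¹) ^ r * ((s i * s j)⁻¹ * s j)) := by
            rw [hq, hsp]
        _ = ((s i * s j)⁻¹) ^ (r + 1 + 1) * s j := by
            rw [pow_succ' _ (r+1), pow_succ _ r]
            simp [mul_assoc]
    refine Prod.ext ?_ ?_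
    · show (s i * s j) ^ k * (s i * (s j * t * s j) * s i) * ((s i * s j)⁻¹) ^ k = _
      have h1 : s i * (s j * t * s j) * s i = (s i * s j) * t * (s i * s j)⁻¹ := by
        rw [mul_inv_rev, cs.inv_simple, cs.inv_simple]
        simp [mul_assoc]
      rw [h1, pow_succ, pow_succ']
      simp [mul_assoc]
    · show ε + ((if t = s j then 1 else 0) + (if s j * t * s j = s i then 1 else 0)) + _ = ε + _
      have h2 : 2 * (k+1) = (2*k) + 1 + 1 := by ring
      rw [h2, Finset.sum_range_succ', Finset.sum_range_succ']
      have e1 : (if s j * t * s j = s i then (1:ZMod 2) else 0)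
          = (if t = ((s i * s j)⁻¹) ^ (0+1) * s j then 1 else 0) := by
        congr 1
        apply propext
        rw [pow_one, mul_inv_rev, cs.inv_simple, cs.inv_simple]
        constructor
        · intro h
          have : t = s j * (s j * t * s j) * s j := by
            simp [mul_assoc, cs.simple_mul_simple_cancel_left]
          rw [this, h]
          try simp [mul_assoc]
        · intro h
          rw [h]
          simp [mul_assoc, cs.simple_mul_simple_cancel_left]
      have esum : ∑ r ∈ Finset.range (2*k),
            (if s i * (s j * t * s j) * s i = ((s i * s j)⁻¹) ^ r * s j then (1:ZMod 2) else 0)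
          = ∑ r ∈ Finset.range (2*k),
            (if t = ((s i * s j)⁻¹) ^ (r+1+1) * s j then (1:ZMod 2) else 0) := by
        refine Finset.sum_congr rfl fun r _ => ?_
        congr 1
        apply propext
        rw [hc]
        constructor
        · intro h; rw [h, hterm r]
        · intro h; rw [h, ← hterm r]
      rw [esum, e1]
      have e0 : (if t = s j then (1:ZMod 2) else 0)
          = (if t = ((s i * s j)⁻¹) ^ 0 * s j then 1 else 0) := by
        norm_num
      rw [e0]
      ring


lemma F_liftable : M.IsLiftable (F cs) := by
  intro i j
  funext p
  obtain ⟨t, ε⟩ := p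
  rw [F_pow]
  have hrel : (s i * s j) ^ M i j = 1 := cs.simple_mul_simple_pow i j
  have hrel' : ((s i * s j)⁻¹) ^ M i j = 1 := by rw [inv_pow, hrel, inv_one]
  have hsum : ∑ r ∈ Finset.range (2 * M i j),
      (if t = ((s i * s j)⁻¹) ^ r * s j then (1:ZMod 2) else 0) = 0 := by
    rw [two_mul, Finset.sum_range_add]
    have : ∀ r : ℕ, ((s i * s j)⁻¹) ^ (M i j + r) = ((s i * s j)⁻¹) ^ r := by
      intro r
      rw [pow_add, hrel', one_mul]
    simp only [this]
    exact CharTwo.add_self_eq_zero _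
  rw [hrel, hrel', hsum]
  simp only [one_mul, mul_one, add_zero]
  rfl

/-- The sign homomorphism `W →* Function.End (W × ZMod 2)`. -/
noncomputable def Phi : W →* Function.End (W × ZMod 2) :=
  cs.lift ⟨F cs, F_liftable cs⟩

lemma Phi_simple (i : B) : Phi cs (s i) = F cs i := by
  simp [Phi]

lemma cnt_cons (a t : W) (l : List W) :
    ((List.count t (a :: l) : ZMod 2)) = (List.count t l : ZMod 2) + (if t = a then 1 else 0) := by
  rw [List.count_cons]
  push_cast
  congr 1
  rcases eq_or_ne t a with h | h
  · simp [h]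
  · simp [h, Ne.symm h]

lemma Phi_wordProd (ω : List B) (t : W) (ε : ZMod 2) :
    Phi cs (π ω) (t, ε) =
      (π ω * t * (π ω)⁻¹, ε + ((cs.rightInvSeq ω).count t : ZMod 2)) := by
  induction ω generalizing ε with
  | nil =>
    simp only [CoxeterSystem.wordProd_nil, map_one, CoxeterSystem.rightInvSeq_nil, count_nil]
    simp
    rfl
  | cons i ω ih =>
    rw [CoxeterSystem.wordProd_cons, map_mul]
    have : (Phi cs (s i) * Phi cs (π ω)) (t, ε) = Phi cs (s i) (Phi cs (π ω) (t, ε)) := rfl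
    rw [this, ih, Phi_simple, F_apply]
    have hris : cs.rightInvSeq (i :: ω) = ((π ω)⁻¹ * s i * π ω) :: cs.rightInvSeq ω := rfl
    refine Prod.ext ?_ ?_
    · show s i * (π ω * t * (π ω)⁻¹) * s i = _
      simp [mul_inv_rev, cs.inv_simple, mul_assoc]
    · show (ε + _) + _ = ε + _
      rw [hris, cnt_cons]
      have hiff : (π ω * t * (π ω)⁻¹ = s i) ↔ (t = (π ω)⁻¹ * s i * π ω) := by
        constructor
        · intro h
          rw [← h]
          simp [mul_assoc]
        · intro h
          rw [h]
          simp [mul_assoc]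
      simp only [hiff]
      ring


lemma ris_count_invariance {ω ω' : List B} (h : π ω = π ω') (t : W) :
    ((cs.rightInvSeq ω).count t : ZMod 2) = ((cs.rightInvSeq ω').count t : ZMod 2) := by
  have h1 := Phi_wordProd cs ω t 0
  have h2 := Phi_wordProd cs ω' t 0
  rw [h] at h1
  rw [h1] at h2
  have := congrArg Prod.snd h2
  simpa using this

lemma lis_count_invariance {ω ω' : List B} (h : π ω = π ω') (t : W) :
    ((cs.leftInvSeq ω).count t : ZMod 2) = ((cs.leftInvSeq ω').count t : ZMod 2) := by
  have hrev : π (ω.reverse) = π (ω'.reverse) := by simp [h]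
  have := ris_count_invariance cs hrev t
  rwa [cs.rightInvSeq_reverse, cs.rightInvSeq_reverse,
    List.count_reverse, List.count_reverse] at this

lemma lis_cons (i : B) (ω : List B) :
    cs.leftInvSeq (i :: ω) = s i :: (cs.leftInvSeq ω).map (MulAut.conj (s i)) := rfl

lemma conj_simple_simple (i : B) (t : W) : (MulAut.conj (s i)) (s i * t * s i) = t := by
  simp [MulAut.conj_apply, cs.inv_simple, mul_assoc, cs.simple_mul_simple_cancel_left]

lemma lis_count_cons (i : B) (ω : List B) (t : W) :
    (cs.leftInvSeq (i :: ω)).count t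
      = (if t = s i then 1 else 0) + (cs.leftInvSeq ω).count (s i * t * s i) := by
  rw [lis_cons, List.count_cons]
  have hmap : List.count t (List.map (⇑(MulAut.conj (s i))) (cs.leftInvSeq ω))
      = List.count (s i * t * s i) (cs.leftInvSeq ω) := by
    have h := List.count_map_of_injective (cs.leftInvSeq ω) (⇑(MulAut.conj (s i)))
      (MulAut.conj (s i)).injective (s i * t * s i)
    rwa [conj_simple_simple] at h
  rw [hmap, add_comm]
  congr 1
  rcases eq_or_ne t (s i) with h | h
  · simp [h]
  · simp [h, Ne.symm h]

lemma lis_count_append (α β : List B) (t : W) :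
    (cs.leftInvSeq (α ++ β)).count t
      = (cs.leftInvSeq α).count t + (cs.leftInvSeq β).count ((π α)⁻¹ * t * π α) := by
  induction α generalizing t with
  | nil => simp
  | cons i α ih =>
    rw [List.cons_append, lis_count_cons, lis_count_cons, ih, CoxeterSystem.wordProd_cons]
    have h : (s i * π α)⁻¹ * t * (s i * π α) = (π α)⁻¹ * (s i * t * s i) * π α := by
      simp [mul_inv_rev, cs.inv_simple, mul_assoc]
    rw [h, add_assoc]

lemma lis_conj_eq_ris (γ : List B) :
    (cs.leftInvSeq γ).map (fun x => (π γ)⁻¹ * x * π γ) = cs.rightInvSeq γ := by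
  induction γ with
  | nil => simp
  | cons j γ ih =>
    rw [lis_cons, List.map_cons, List.map_map]
    have hris : cs.rightInvSeq (j :: γ) = ((π γ)⁻¹ * s j * π γ) :: cs.rightInvSeq γ := rfl
    rw [hris]
    congr 1
    · rw [CoxeterSystem.wordProd_cons]
      simp [mul_inv_rev, cs.inv_simple, mul_assoc, cs.simple_mul_simple_cancel_left]
    · rw [← ih]
      apply List.map_congr_left
      intro x _
      rw [CoxeterSystem.wordProd_cons]
      simp [MulAut.conj_apply, mul_inv_rev, cs.inv_simple, mul_assoc,
        cs.simple_mul_simple_cancel_left]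

lemma lis_count_eq_ris_count (γ : List B) (t : W) :
    (cs.leftInvSeq γ).count t = (cs.rightInvSeq γ).count ((π γ)⁻¹ * t * π γ) := by
  have hinj : Function.Injective (fun x : W => (π γ)⁻¹ * x * π γ) := by
    intro a b hab
    simpa [mul_assoc] using hab
  have h := List.count_map_of_injective (cs.leftInvSeq γ)
    (fun x : W => (π γ)⁻¹ * x * π γ) hinj t
  rw [lis_conj_eq_ris] at h
  exact h.symm

lemma lis_count_odd {t v : W} (ht : cs.IsReflection t) (hlt : ℓ (t * v) < ℓ v)
    {ω : List B} (hω : π ω = v) : ((cs.leftInvSeq ω).count t : ZMod 2) = 1 := by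
  obtain ⟨u', hu'red, hu'⟩ := cs.exists_reduced_word' (t * v)
  have htt : t * t = 1 := ht.mul_self
  have hti : t⁻¹ = t := ht.inv
  obtain ⟨q, i, hq⟩ := ht
  obtain ⟨γ, hγ⟩ := cs.wordProd_surjective q
  have hpalprod : π (γ ++ i :: γ.reverse) = t := by
    rw [show γ ++ i :: γ.reverse = γ ++ ([i] ++ γ.reverse) from rfl]
    rw [CoxeterSystem.wordProd_append, CoxeterSystem.wordProd_append]
    simp [hγ, hq, mul_assoc]
  have hω₀ : π ((γ ++ i :: γ.reverse) ++ u') = v := by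
    rw [CoxeterSystem.wordProd_append, hpalprod, ← hu', ← mul_assoc, htt, one_mul]
  have hzero : (cs.leftInvSeq u').count t = 0 := by
    rw [List.count_eq_zero]
    intro hmem
    have hinv := cs.isLeftInversion_of_mem_leftInvSeq hu'red hmem
    rw [← hu'] at hinv
    have h2 := hinv.2
    rw [← mul_assoc, htt, one_mul] at h2
    omega
  have hq' : (π (γ ++ i :: γ.reverse))⁻¹ * t * π (γ ++ i :: γ.reverse) = t := by
    rw [hpalprod, hti, htt, one_mul]
  have hsi : q⁻¹ * t * q = s i := by
    rw [hq]
    simp [mul_assoc]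
  have key : ∀ a : ZMod 2, ((a + (1 + a)) + 0 : ZMod 2) = 1 := by decide
  have hinvar := lis_count_invariance cs
    (show π ω = π ((γ ++ i :: γ.reverse) ++ u') by rw [hω, hω₀]) t
  rw [hinvar]
  rw [lis_count_append cs (γ ++ i :: γ.reverse) u' t, hq', hzero,
    lis_count_append cs γ (i :: γ.reverse) t, lis_count_eq_ris_count cs γ t, hγ, hsi,
    lis_count_cons, if_pos rfl, cs.simple_mul_simple_self, one_mul,
    cs.leftInvSeq_reverse, List.count_reverse]
  push_cast
  exact key _


theorem strong_exchange {ω : List B} {t : W} (ht : cs.IsReflection t)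
    (hlt : ℓ (t * π ω) < ℓ (π ω)) :
    ∃ j < ω.length, t * π ω = π (ω.eraseIdx j) := by
  have hodd := lis_count_odd cs ht hlt (rfl : π ω = π ω)
  have hmem : t ∈ cs.leftInvSeq ω := by
    by_contra hmem
    rw [List.count_eq_zero_of_not_mem hmem] at hodd
    simp at hodd
  obtain ⟨j, hj, hget⟩ := List.getElem_of_mem hmem
  rw [cs.length_leftInvSeq] at hj
  refine ⟨j, hj, ?_⟩
  rw [← cs.getD_leftInvSeq_mul_wordProd ω j]
  congr 1
  rw [List.getD_eq_getElem _ _ (by rw [cs.length_leftInvSeq]; exact hj), hget]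

lemma exchange_sublist {ω : List B} {v : W} (hω : π ω = v) {t : W}
    (ht : cs.IsReflection t) (hlt : ℓ (t * v) < ℓ v) :
    ∃ u, u.Sublist ω ∧ π u = t * v := by
  obtain ⟨j, hj, he⟩ := strong_exchange cs ht (by rw [hω]; exact hlt)
  exact ⟨ω.eraseIdx j, List.eraseIdx_sublist ω j, by rw [← he, hω]⟩

lemma leftMost_spec : ∀ (ω : List B), cs.IsReduced ω → ∀ v : W,
    (∃ t, t.Sublist ω ∧ π t = v) →
    (leftMostWord cs ω v).Sublist ω ∧ π (leftMostWord cs ω v) = v ∧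
      (leftMostWord cs ω v).length = ℓ v := by
  intro ω
  induction ω with
  | nil =>
    rintro _ v ⟨t, hsub, hprod⟩
    rw [List.sublist_nil.mp hsub] at hprod
    rw [CoxeterSystem.wordProd_nil] at hprod
    simp [leftMostWord, ← hprod]
  | cons i rest ih =>
    rintro hred v ⟨t, hsub, hprod⟩
    have hrest_red : cs.IsReduced rest := by
      have := CoxeterSystem.IsReduced.drop hred (j := 1)
      simpa using this
    by_cases h : ℓ (s i * v) < ℓ v
    · -- selected case
      have hwit : ∃ t', t'.Sublist rest ∧ π t' = s i * v := by
        rcases List.sublist_cons_iff.mp hsub with hsub' | ⟨r, rfl, hr⟩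
        · obtain ⟨-, hu2, hu3⟩ := ih hrest_red v ⟨t, hsub', hprod⟩
          have hured : cs.IsReduced (leftMostWord cs rest v) := by
            rw [CoxeterSystem.IsReduced, hu2, hu3]
          obtain ⟨u', hu'⟩ := exchange_sublist cs hu2 (cs.isReflection_simple i) h
          obtain ⟨-, hsl, -⟩ := ih hrest_red v ⟨t, hsub', hprod⟩
          exact ⟨u', hu'.1.trans (ih hrest_red v ⟨t, hsub', hprod⟩).1, hu'.2⟩
        · refine ⟨r, hr, ?_⟩
          rw [CoxeterSystem.wordProd_cons] at hprod
          rw [← hprod, ← mul_assoc, cs.simple_mul_simple_self, one_mul]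
      obtain ⟨h1, h2, h3⟩ := ih hrest_red (s i * v) hwit
      have hlen : ℓ (s i * v) + 1 = ℓ v := by
        rcases cs.length_simple_mul v i with hh | hh
        · omega
        · exact hh
      rw [leftMostWord, if_pos h]
      refine ⟨List.Sublist.cons₂ i h1, ?_, ?_⟩
      · rw [CoxeterSystem.wordProd_cons, h2, ← mul_assoc, cs.simple_mul_simple_self, one_mul]
      · simp only [List.length_cons, h3]
        omega
    · -- skipped case
      have hwit : ∃ t', t'.Sublist rest ∧ π t' = v := by
        rcases List.sublist_cons_iff.mp hsub with hsub' | ⟨r, rfl, hr⟩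
        · exact ⟨t, hsub', hprod⟩
        · rw [CoxeterSystem.wordProd_cons] at hprod
          have hv0 : π r = s i * v := by
            rw [← hprod, ← mul_assoc, cs.simple_mul_simple_self, one_mul]
          have hne : ℓ (s i * v) ≠ ℓ v := cs.length_simple_mul_ne v i
          have hgt : ℓ v < ℓ (s i * v) := by omega
          have hlt0 : ℓ (s i * (s i * v)) < ℓ (s i * v) := by
            rw [← mul_assoc, cs.simple_mul_simple_self, one_mul]
            exact hgt
          obtain ⟨-, hu2, hu3⟩ := ih hrest_red (s i * v) ⟨r, hr, hv0⟩
          obtain ⟨u', hu'⟩ := exchange_sublist cs hu2 (cs.isReflection_simple i) hlt0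
          refine ⟨u', hu'.1.trans (ih hrest_red (s i * v) ⟨r, hr, hv0⟩).1, ?_⟩
          rw [hu'.2, ← mul_assoc, cs.simple_mul_simple_self, one_mul]
      obtain ⟨h1, h2, h3⟩ := ih hrest_red v hwit
      rw [leftMostWord, if_neg h]
      exact ⟨h1.cons i, h2, h3⟩


/-- One step down in Bruhat order: `a` is obtained from `b` by a reflection decreasing length. -/
def bstep (a b : W) : Prop := ∃ t, cs.IsReflection t ∧ a = t * b ∧ ℓ a < ℓ b

/-- Bruhat order via chains of reflections. -/
def ble (v w : W) : Prop := Relation.ReflTransGen (bstep cs) v w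

lemma bstep_up {w : W} {i : B} (h : ℓ w < ℓ (s i * w)) : bstep cs w (s i * w) := by
  refine ⟨s i, cs.isReflection_simple i, ?_, h⟩
  rw [← mul_assoc, cs.simple_mul_simple_self, one_mul]

lemma chain_rep {v w : W} (h : ble cs v w) {ω : List B} (hred : cs.IsReduced ω)
    (hω : π ω = w) : ∃ u, u.Sublist ω ∧ π u = v := by
  induction h using Relation.ReflTransGen.head_induction_on with
  | refl => exact ⟨ω, List.Sublist.refl ω, hω⟩
  | head hstep hchain ih =>
    obtain ⟨t, ht, rfl, hlt⟩ := hstep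
    obtain ⟨u, husub, huprod⟩ := ih
    obtain ⟨u₀sub, u₀prod, u₀len⟩ := leftMost_spec cs ω hred _ ⟨u, husub, huprod⟩
    obtain ⟨u', hu'sub, hu'prod⟩ := exchange_sublist cs u₀prod ht hlt
    exact ⟨u', hu'sub.trans u₀sub, hu'prod⟩

lemma cover_lift {t x : W} (ht : cs.IsReflection t) (hc : ℓ (t * x) + 1 = ℓ x)
    {i : B} (hdx : ℓ (s i * x) < ℓ x) (hdv : ℓ (t * x) < ℓ (s i * (t * x))) :
    s i * (t * x) = x := by
  obtain ⟨ρ', hρ'red, hρ'⟩ := cs.exists_reduced_word' (s i * x)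
  have hx : π (i :: ρ') = x := by
    rw [CoxeterSystem.wordProd_cons, ← hρ', ← mul_assoc, cs.simple_mul_simple_self, one_mul]
  have hlen : ρ'.length = ℓ (s i * x) := by rw [← hρ'red, ← hρ']
  obtain ⟨j, hj, hje⟩ := strong_exchange cs ht (by rw [hx]; omega)
  rw [hx] at hje
  match j with
  | 0 =>
    simp only [List.eraseIdx_cons_zero] at hje
    rw [hje, ← hρ', ← mul_assoc, cs.simple_mul_simple_self, one_mul]
  | k + 1 =>
    exfalso
    simp only [List.eraseIdx_cons_succ] at hje
    rw [CoxeterSystem.wordProd_cons] at hje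
    have h1 : s i * (t * x) = π (ρ'.eraseIdx k) := by
      rw [hje, ← mul_assoc, cs.simple_mul_simple_self, one_mul]
    have h2 : ℓ (s i * (t * x)) ≤ (ρ'.eraseIdx k).length := by
      rw [h1]; exact cs.length_wordProd_le _
    have hk : k < ρ'.length := by
      have := hj
      simp only [List.length_cons] at this
      omega
    have h3 : (ρ'.eraseIdx k).length = ρ'.length - 1 := by
      rw [List.length_eraseIdx]
      simp [hk]
    omega

lemma ble_aux {v w : W} (h : ble cs v w) (i : B) :
    ble cs (s i * v) w ∨ ble cs (s i * v) (s i * w) := by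
  induction h using Relation.ReflTransGen.head_induction_on with
  | refl => exact Or.inr Relation.ReflTransGen.refl
  | @head a c hstep hchain ih =>
    obtain ⟨t, ht, rfl, hlt⟩ := hstep
    have ht' : cs.IsReflection (s i * t * (s i)⁻¹) := ht.conj (s i)
    rw [cs.inv_simple] at ht'
    have hconj : s i * (t * c) = (s i * t * s i) * (s i * c) := by
      simp [mul_assoc, cs.simple_mul_simple_cancel_left]
    rcases lt_trichotomy (ℓ (s i * (t * c))) (ℓ (s i * c)) with hlt2 | heq | hgt
    · have hstep2 : bstep cs (s i * (t * c)) (s i * c) := ⟨s i * t * s i, ht', hconj, hlt2⟩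
      rcases ih with h | h
      · exact Or.inl (Relation.ReflTransGen.head hstep2 h)
      · exact Or.inr (Relation.ReflTransGen.head hstep2 h)
    · exfalso
      have := ht'.length_mul_right_ne (s i * c)
      rw [← hconj] at this
      exact this heq
    · -- forced cover situation
      have p1 : ℓ (s i * (t * c)) ≠ ℓ (t * c) := cs.length_simple_mul_ne (t * c) i
      have p2 : ℓ (s i * c) ≠ ℓ c := cs.length_simple_mul_ne c i
      rcases cs.length_simple_mul (t * c) i with q1 | q1 <;>
        rcases cs.length_simple_mul c i with q2 | q2
      all_goals try omega
      -- remaining: ℓ (s i * (t*c)) = ℓ (t*c) + 1 and ℓ (s i * c) + 1 = ℓ c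
      have hcov : ℓ (t * c) + 1 = ℓ c := by omega
      have heq2 : s i * (t * c) = c :=
        cover_lift cs ht hcov (by omega) (by omega)
      rw [heq2]
      exact Or.inl hchain

lemma rep_chain : ∀ ω : List B, cs.IsReduced ω → ∀ u : List B, u.Sublist ω →
    cs.IsReduced u → ble cs (π u) (π ω) := by
  intro ω
  induction ω with
  | nil =>
    intro _ u hsub _
    rw [List.sublist_nil.mp hsub]
    exact Relation.ReflTransGen.refl
  | cons i rest ih =>
    intro hred u hsub hured
    have hrest_red : cs.IsReduced rest := by
      have := CoxeterSystem.IsReduced.drop hred (j := 1)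
      simpa using this
    have hup : bstep cs (π rest) (π (i :: rest)) := by
      rw [CoxeterSystem.wordProd_cons]
      apply bstep_up
      have h1 : ℓ (π rest) ≤ rest.length := cs.length_wordProd_le rest
      have h2 : ℓ (s i * π rest) = rest.length + 1 := by
        rw [← CoxeterSystem.wordProd_cons, hred]
        rfl
      omega
    rcases List.sublist_cons_iff.mp hsub with hsub' | ⟨r, rfl, hr⟩
    · exact (ih hrest_red u hsub' hured).tail hup
    · have hr_red : cs.IsReduced r := by
        have := CoxeterSystem.IsReduced.drop hured (j := 1)
        simpa using this
      have hch := ih hrest_red r hr hr_red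
      rcases ble_aux cs hch i with h | h
      · have h' : ble cs (π (i :: r)) (π rest) := by
          rw [cs.wordProd_cons]
          exact h
        exact h'.tail hup
      · rw [cs.wordProd_cons i r, cs.wordProd_cons i rest]
        exact h

lemma bruhat_transfer {v w : W} {ω₁ : List B} (hred₁ : cs.IsReduced ω₁) (hw₁ : π ω₁ = w)
    {u₁ : List B} (hsub₁ : u₁.Sublist ω₁) (hv₁ : π u₁ = v)
    {ω : List B} (hred : cs.IsReduced ω) (hω : π ω = w) :
    ∃ u, u.Sublist ω ∧ π u = v := by
  obtain ⟨hs, hp, hl⟩ := leftMost_spec cs ω₁ hred₁ v ⟨u₁, hsub₁, hv₁⟩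
  have hlred : cs.IsReduced (leftMostWord cs ω₁ v) := by
    rw [CoxeterSystem.IsReduced, hp, hl]
  have hch : ble cs v w := by
    rw [← hp, ← hw₁]
    exact rep_chain cs ω₁ hred₁ _ hs hlred
  exact chain_rep cs hch hred hω


lemma rightMostAux_eq_leftMost : ∀ (ρ : List B) (v : W),
    rightMostAuxWord cs ρ v = leftMostWord cs ρ v⁻¹ := by
  intro ρ
  induction ρ with
  | nil => intro v; rfl
  | cons i rest ih =>
    intro v
    have hcond : (ℓ (v * s i) < ℓ v) ↔ (ℓ (s i * v⁻¹) < ℓ v⁻¹) := by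
      rw [show s i * v⁻¹ = (v * s i)⁻¹ by rw [mul_inv_rev, cs.inv_simple],
        cs.length_inv, cs.length_inv]
    rw [rightMostAuxWord, leftMostWord]
    by_cases h : ℓ (v * s i) < ℓ v
    · rw [if_pos h, if_pos (hcond.mp h), ih]
      congr 1
      rw [mul_inv_rev, cs.inv_simple]
    · rw [if_neg h, if_neg (fun hc => h (hcond.mpr hc)), ih]

end SubwordAux

/-- **Existence of left-most and right-most subexpressions for reduced words.**
If `𝐰` is a reduced expression for `w` and `v ≤ w` in Bruhat order, then the left-most and
right-most subexpressions for `v` in `𝐰` both exist (their selected letters multiply to `v`),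
and each has exactly `ℓ(v)` non-identity entries. -/
theorem leftMost_rightMost_exist (cs : CoxeterSystem M W) (ω : List B) (w v : W)
    (hred : cs.IsReduced ω) (hw : cs.wordProd ω = w) (hv : bruhatLE cs v w) :
    cs.wordProd (leftMostWord cs ω v) = v ∧
    (leftMostWord cs ω v).length = cs.length v ∧
    cs.wordProd (rightMostWord cs ω v) = v ∧
    (rightMostWord cs ω v).length = cs.length v := by
  classical
  obtain ⟨ω₁, hred₁, hw₁, ω₁', hsub₁, hv₁⟩ := hv
  obtain ⟨u, husub, huprod⟩ :=
    SubwordAux.bruhat_transfer cs hred₁ hw₁ hsub₁ hv₁ hred hw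
  obtain ⟨hLs, hLp, hLl⟩ := SubwordAux.leftMost_spec cs ω hred v ⟨u, husub, huprod⟩
  have hrevred : cs.IsReduced ω.reverse := (cs.isReduced_reverse_iff ω).mpr hred
  have hrep : ∃ u', u'.Sublist ω.reverse ∧ cs.wordProd u' = v⁻¹ := by
    refine ⟨u.reverse, ?_, ?_⟩
    · exact husub.reverse
    · rw [cs.wordProd_reverse, huprod]
  obtain ⟨hRs, hRp, hRl⟩ := SubwordAux.leftMost_spec cs ω.reverse hrevred v⁻¹ hrep
  have hRMeq : rightMostWord cs ω v = (leftMostWord cs ω.reverse v⁻¹).reverse := by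
    rw [rightMostWord, SubwordAux.rightMostAux_eq_leftMost]
  refine ⟨hLp, hLl, ?_, ?_⟩
  · rw [hRMeq, cs.wordProd_reverse, hRp, inv_inv]
  · rw [hRMeq, List.length_reverse, hRl, cs.length_inv]
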